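/- arXiv:0904.0724 — 2 statements merged into one kernel-verified Lean document; each statement's English description precedes it below -/
import Mathlib

section
/- Let k be a positive integer and let G be a finite simple graph that is k-regular and k-edge-connected. Then for every vertex v of G, the induced subgraph of G on the complement of {v} is (⌊(k−1)/2⌋ + 1)-edge-connected; that is, deleting any set of at most ⌊(k−1)/2⌋ edges from the vertex-deleted subgraph G − v leaves it connected. -/
/-- A simple graph is `k`-regular if every vertex has exactly `k` neighbors. -/
def IsRegularGraph {V : Type*} (G : SimpleGraph V) (k : ℕ) : Prop :=
  ∀ v : V, (G.neighborSet v).ncard = k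

/-- A simple graph is `p`-edge-connected if deleting any set of at most `p - 1`
edges leaves a connected graph. -/
def EdgeConnected {V : Type*} (G : SimpleGraph V) (p : ℕ) : Prop :=
  ∀ E : Finset (Sym2 V), ↑E ⊆ G.edgeSet → E.card ≤ p - 1 →
    (G.deleteEdges ↑E).Connected

/-!
Let `H` be `G - v` with a set `E` of edges removed, and suppose `H` is disconnected, with
`T` the vertex set of a component and `T'` the rest. In `G`, every edge leaving `T` either
lies in `E` or joins `T` to `v`, so `k`-edge-connectivity gives `k ≤ |E| + |N(v) ∩ T|`, and
likewise `k ≤ |E| + |N(v) ∩ T'|`. Adding, and using `|N(v)| = k`, yields `k ≤ 2 |E|`.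
-/

open SimpleGraph

namespace EdgeConnected

variable {V : Type*} {G : SimpleGraph V} {k : ℕ}

theorem le_card_of_cut_subset (hG : EdgeConnected G k) (S : Set V) {a b : V}
    (ha : a ∈ S) (hb : b ∉ S) (C : Finset (Sym2 V))
    (hC : ∀ x y, G.Adj x y → x ∈ S → y ∉ S → s(x, y) ∈ C) : k ≤ C.card := by
  classical
  by_contra! hlt
  set C' := C.filter (· ∈ G.edgeSet)
  have hC' : (C' : Set (Sym2 V)) ⊆ G.edgeSet := fun e he => (Finset.mem_filter.1 he).2
  obtain ⟨w⟩ := (hG C' hC' (by grind [Finset.card_filter_le])).preconnected a b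
  obtain ⟨d, -, hd₁, hd₂⟩ := w.exists_boundary_dart S ha hb
  obtain ⟨hadj, hnot⟩ := (deleteEdges_adj ..).1 d.adj
  exact hnot (Finset.mem_filter.2 ⟨hC _ _ hadj hd₁ hd₂, hadj⟩)

theorem le_card_add_ncard_neighborSet_inter (hG : EdgeConnected G k) {v : V}
    (hN : (G.neighborSet v).Finite) (E : Finset (Sym2 ({v}ᶜ : Set V)))
    (T : Set ({v}ᶜ : Set V))
    (hT : ∀ p q, ((G.induce {v}ᶜ).deleteEdges E).Adj p q → p ∈ T → q ∈ T)
    {p q : ({v}ᶜ : Set V)} (hp : p ∈ T) (hq : q ∉ T) :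
    k ≤ E.card + (G.neighborSet v ∩ Subtype.val '' T).ncard := by
  classical
  have hNT : (G.neighborSet v ∩ Subtype.val '' T).Finite := hN.inter_of_left _
  set C := E.image (Sym2.map Subtype.val) ∪ hNT.toFinset.image (s(v, ·))
  have hcut :
      ∀ x y, G.Adj x y → x ∈ Subtype.val '' T → y ∉ Subtype.val '' T → s(x, y) ∈ C := by
    rintro x y hxy ⟨x, hx, rfl⟩ hy
    by_cases hyv : y = v
    · subst hyv
      refine Finset.mem_union_right _ (Finset.mem_image.2 ⟨x, ?_, Sym2.eq_swap⟩)
      exact hNT.mem_toFinset.2 ⟨hxy.symm, x, hx, rfl⟩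
    · refine Finset.mem_union_left _ (Finset.mem_image.2 ⟨s(x, ⟨y, hyv⟩), ?_, rfl⟩)
      by_contra hE
      exact hy ⟨_, hT x ⟨y, hyv⟩ ((deleteEdges_adj ..).2 ⟨hxy, hE⟩) hx, rfl⟩
  calc k ≤ C.card := hG.le_card_of_cut_subset (Subtype.val '' T) ⟨p, hp, rfl⟩
        (Subtype.val_injective.mem_set_image.not.2 hq) C hcut
    _ ≤ (E.image (Sym2.map Subtype.val)).card + (hNT.toFinset.image (s(v, ·))).card :=
        Finset.card_union_le _ _
    _ ≤ E.card + hNT.toFinset.card := add_le_add Finset.card_image_le Finset.card_image_le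
    _ = E.card + (G.neighborSet v ∩ Subtype.val '' T).ncard := by
        rw [Set.ncard_eq_toFinset_card _ hNT]

end EdgeConnected

theorem Set.ncard_inter_image_add_ncard_inter_image_compl_le {V : Type*} {s U : Set V}
    (hs : s.Finite) (T : Set U) :
    (s ∩ Subtype.val '' T).ncard + (s ∩ Subtype.val '' Tᶜ).ncard ≤ s.ncard := by
  have hdisj : Disjoint (s ∩ Subtype.val '' T) (s ∩ Subtype.val '' Tᶜ) :=
    ((disjoint_image_iff Subtype.val_injective).2 disjoint_compl_right).mono inter_subset_right
      inter_subset_right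
  rw [← ncard_union_eq hdisj (hs.inter_of_left _) (hs.inter_of_left _)]
  exact ncard_le_ncard (union_subset inter_subset_left inter_subset_left) hs

theorem vertexDeleted_edgeConnected_general {V : Type*} (G : SimpleGraph V)
    (k : ℕ) (hk : 0 < k) (hreg : IsRegularGraph G k) (hconn : EdgeConnected G k)
    (v : V) :
    EdgeConnected (G.induce ({v}ᶜ : Set V)) ((k - 1) / 2 + 1) := by
  intro E _ hE
  have hdeg : 0 < (G.neighborSet v).ncard := hreg v ▸ hk
  have hN : (G.neighborSet v).Finite := Set.finite_of_ncard_pos hdeg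
  obtain ⟨w, hw⟩ := (Set.ncard_pos hN).1 hdeg
  refine (connected_iff _).2 ⟨fun x y => ?_, ⟨⟨w, (G.ne_of_adj hw).symm⟩⟩⟩
  by_contra hxy
  set H := (G.induce {v}ᶜ).deleteEdges E
  have hT := hconn.le_card_add_ncard_neighborSet_inter hN E {z | H.Reachable x z}
    (fun _ _ hadj hp => hp.trans hadj.reachable) (Reachable.refl x) hxy
  have hT' := hconn.le_card_add_ncard_neighborSet_inter hN E {z | H.Reachable x z}ᶜ
    (fun _ _ hadj hp hq => hp (hq.trans hadj.symm.reachable)) hxy (not_not.2 (Reachable.refl x))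
  have hsplit := Set.ncard_inter_image_add_ncard_inter_image_compl_le hN {z | H.Reachable x z}
  rw [hreg v] at hsplit
  omega

/-- If `G` is a finite simple graph which is `k`-regular and `k`-edge-connected
(`k > 0`), then for every vertex `v` the vertex-deleted subgraph `G - v` is
`(⌊(k-1)/2⌋ + 1)`-edge-connected. -/
theorem vertexDeleted_edgeConnected {V : Type*} [Fintype V] (G : SimpleGraph V)
    (k : ℕ) (hk : 0 < k) (hreg : IsRegularGraph G k) (hconn : EdgeConnected G k)
    (v : V) :
    EdgeConnected (G.induce ({v}ᶜ : Set V)) ((k - 1) / 2 + 1) :=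
  vertexDeleted_edgeConnected_general G k hk hreg hconn v
end

section
/- Let G₁ and G₂ be finite simple graphs on disjoint vertex sets V₁ and V₂, let v₁ ∈ V₁ and v₂ ∈ V₂ have the same degree, and let G be a splice of G₁ and G₂ at (v₁, v₂) along some bijection σ. If the vertex-deleted subgraph G₂ − v₂ is connected, then G₁ is a minor of G. -/
/-- The splice of `G₁` and `G₂` at `(v₁, v₂)` along the bijection `σ` between
the neighbors of `v₁` and the neighbors of `v₂`. -/
def splice {V₁ V₂ : Type*} (G₁ : SimpleGraph V₁) (G₂ : SimpleGraph V₂)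
    (v₁ : V₁) (v₂ : V₂) (σ : G₁.neighborSet v₁ ≃ G₂.neighborSet v₂) :
    SimpleGraph ({x : V₁ // x ≠ v₁} ⊕ {y : V₂ // y ≠ v₂}) where
  Adj a b :=
    match a, b with
    | Sum.inl u, Sum.inl w => G₁.Adj u.1 w.1
    | Sum.inr u, Sum.inr w => G₂.Adj u.1 w.1
    | Sum.inl u, Sum.inr w => ∃ h : u.1 ∈ G₁.neighborSet v₁, (σ ⟨u.1, h⟩ : V₂) = w.1
    | Sum.inr w, Sum.inl u => ∃ h : u.1 ∈ G₁.neighborSet v₁, (σ ⟨u.1, h⟩ : V₂) = w.1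
  symm := ⟨by
    rintro (u | u) (w | w) h
    · exact G₁.adj_symm h
    · exact h
    · exact h
    · exact G₂.adj_symm h⟩
  loopless := ⟨by
    rintro (u | u) h
    · exact G₁.ne_of_adj h rfl
    · exact G₂.ne_of_adj h rfl⟩

/-- `H` is a minor of `G` if each vertex `x` of `H` can be assigned a nonempty
branch set `B x` of vertices of `G` such that the branch sets are pairwise
disjoint, each induces a connected subgraph of `G`, and every edge of `H` is
witnessed by an edge of `G` between the corresponding branch sets. -/
def IsMinor {W V : Type*} (H : SimpleGraph W) (G : SimpleGraph V) : Prop :=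
  ∃ B : W → Set V,
    (∀ x, (B x).Nonempty) ∧
    (Pairwise fun x y => Disjoint (B x) (B y)) ∧
    (∀ x, (G.induce (B x)).Connected) ∧
    (∀ x y, H.Adj x y → ∃ a ∈ B x, ∃ b ∈ B y, G.Adj a b)

/-!
Every vertex `u ≠ v₁` of `G₁` is its own branch set `{u}`, and `v₁` gets the whole copy of
`G₂ - v₂`: it is connected, and through `σ` it is adjacent to every neighbour of `v₁`.
-/

open SimpleGraph

lemma connected_induce_singleton {V : Type*} (G : SimpleGraph V) (a : V) :
    (G.induce {a}).Connected := by
  rw [induce_singleton_eq_top]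
  exact connected_top

lemma connected_induce_range {W V : Type*} {H : SimpleGraph W} {G : SimpleGraph V}
    (f : H →g G) (hH : H.Connected) : (G.induce (Set.range f)).Connected :=
  hH.map ⟨Set.rangeFactorization f, fun h => f.map_adj h⟩ Set.rangeFactorization_surjective

theorem isMinor_of_injective_of_connected_attachment {W V : Type*} {H : SimpleGraph W}
    {G : SimpleGraph V} (v : W) (f : H.induce {v}ᶜ →g G) (hf : Function.Injective f)
    (S : Set V) (hS : (G.induce S).Connected) (hfS : ∀ u, f u ∉ S)
    (hattach : ∀ u (hu : H.Adj v u), ∃ s ∈ S, G.Adj (f ⟨u, hu.ne'⟩) s) :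
    IsMinor H G := by
  classical
  refine ⟨fun x => if hx : x = v then S else {f ⟨x, hx⟩}, fun x => ?_, fun x y hxy => ?_,
    fun x => ?_, fun x y hxy => ?_⟩
  · dsimp only
    split_ifs
    · exact Set.nonempty_coe_sort.mp hS.nonempty
    · exact Set.singleton_nonempty _
  · dsimp only
    split_ifs with hx hy hy
    · exact absurd (hx.trans hy.symm) hxy
    · exact Set.disjoint_singleton_right.mpr (hfS _)
    · exact Set.disjoint_singleton_left.mpr (hfS _)
    · exact Set.disjoint_singleton.mpr fun h => hxy (congrArg Subtype.val (hf h))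
  · dsimp only
    by_cases hx : x = v
    · rw [dif_pos hx]
      exact hS
    · rw [dif_neg hx]
      exact connected_induce_singleton G _
  · dsimp only
    split_ifs with hx hy hy
    · exact absurd (hx.trans hy.symm) hxy.ne
    · obtain ⟨s, hs, hadj⟩ := hattach y (hx ▸ hxy)
      exact ⟨s, hs, _, rfl, hadj.symm⟩
    · obtain ⟨s, hs, hadj⟩ := hattach x (hy ▸ hxy.symm)
      exact ⟨_, rfl, s, hs, hadj⟩
    · exact ⟨_, rfl, _, rfl, f.map_adj hxy⟩

theorem isMinor_of_splice_general {V₁ V₂ : Type*}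
    (G₁ : SimpleGraph V₁) (G₂ : SimpleGraph V₂) (v₁ : V₁) (v₂ : V₂)
    (σ : G₁.neighborSet v₁ ≃ G₂.neighborSet v₂)
    (hconn : (G₂.induce ({v₂}ᶜ : Set V₂)).Connected) :
    IsMinor G₁ (splice G₁ G₂ v₁ v₂ σ) := by
  let left : G₁.induce {v₁}ᶜ →g splice G₁ G₂ v₁ v₂ σ := ⟨fun u => .inl u, id⟩
  let right : G₂.induce {v₂}ᶜ →g splice G₁ G₂ v₁ v₂ σ := ⟨fun w => .inr w, id⟩
  refine isMinor_of_injective_of_connected_attachment v₁ left (fun _ _ h => Sum.inl_injective h)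
    _ (connected_induce_range right hconn) (by simp [left, right]) fun u hu => ?_
  exact ⟨.inr ⟨σ ⟨u, hu⟩, (σ ⟨u, hu⟩).2.ne'⟩, ⟨_, rfl⟩, hu, rfl⟩

/-- If the vertex-deleted subgraph `G₂ - v₂` is connected, then `G₁` is a
minor of any splice of `G₁` and `G₂` at `(v₁, v₂)`. -/
theorem isMinor_of_splice {V₁ V₂ : Type*} [Fintype V₁] [Fintype V₂]
    (G₁ : SimpleGraph V₁) (G₂ : SimpleGraph V₂) (v₁ : V₁) (v₂ : V₂)
    (σ : G₁.neighborSet v₁ ≃ G₂.neighborSet v₂)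
    (hconn : (G₂.induce ({v₂}ᶜ : Set V₂)).Connected) :
    IsMinor G₁ (splice G₁ G₂ v₁ v₂ σ) :=
  isMinor_of_splice_general G₁ G₂ v₁ v₂ σ hconn
end
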